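/- Let x, y, z be i.i.d. exponential random variables with rate μ > 0, let δ ∈ (0,1) with δ ≠ 1/2, let Δ ≥ 0, and set the correlated original and replica service times X₁ := (1−δ)x + δz and X₂ := (1−δ)y + δz. Then: (i) E[min{X₁, Δ + X₂}] = (1/μ)·( 1 − ((1−δ)/2)·e^{−μΔ/(1−δ)} ); (ii) E[min{X₁ − Δ, X₂}·1_{X₁ > Δ}] = (1/μ)·( (δ²/(2δ−1))·e^{−μΔ/δ} − ((1−δ)/(2(2δ−1)))·e^{−μΔ/(1−δ)} ); and hence (iii) for any arrival rate λ > 0, the resource usage u = λ·E[min{X₁, Δ+X₂}] + λ·E[min{X₁−Δ, X₂}·1_{X₁>Δ}] equals (λ/μ)·( 1 + (δ²/(2δ−1))·e^{−μΔ/δ} − (δ(1−δ)/(2δ−1))·e^{−μΔ/(1−δ)} ). -/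

import Mathlib

/-!
Put `c = Δ / (1 - δ)`. Since `X₂ ≥ 0`, both busy times are differences of positive parts,
`min X₁ (Δ + X₂) = X₁ - (X₁ - Δ - X₂)⁺` and
`1{X₁ > Δ} min (X₁ - Δ) X₂ = (X₁ - Δ)⁺ - (X₁ - Δ - X₂)⁺`.
The common component `δ z` cancels in `X₁ - Δ - X₂ = (1 - δ) (x - y - c)`, and by memorylessness
`E (x - y - c)⁺ = E e^{-μ (y + c)} / μ = e^{-μ c} / (2 μ)`. Integrating out `z` first,
`E (X₁ - Δ)⁺` becomes an explicit exponential integral in `x`, separately on `x ≤ c` and `x > c`.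
-/

open MeasureTheory ProbabilityTheory Real Set

lemma integrable_indicator_Iic_exp_mul {ν : Measure ℝ} [IsFiniteMeasure ν] {p : ℝ} (hp : 0 ≤ p)
    (c : ℝ) : Integrable ((Iic c).indicator fun t => exp (p * t)) ν := by
  refine (integrable_const (exp (p * c))).mono'
    ((measurable_const.mul measurable_id).exp.indicator measurableSet_Iic).aestronglyMeasurable
    (ae_of_all _ fun t => ?_)
  by_cases htc : t ≤ c
  · rw [indicator_of_mem (mem_Iic.mpr htc), norm_of_nonneg (exp_pos _).le, exp_le_exp]
    exact mul_le_mul_of_nonneg_left htc hp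
  · rw [indicator_of_notMem (by simpa using htc), norm_zero]
    positivity

namespace ProbabilityTheory

section ExponentialDistribution

variable {r : ℝ}

lemma integral_expMeasure_eq_setIntegral (hr : 0 < r) (f : ℝ → ℝ) :
    ∫ t, f t ∂expMeasure r = ∫ t in Ioi 0, r * exp (-(r * t)) * f t := by
  have hpdf : Measurable (exponentialPDF r) := (measurable_exponentialPDFReal r).ennreal_ofReal
  rw [show expMeasure r = volume.withDensity (exponentialPDF r) from rfl,
    integral_withDensity_eq_integral_toReal_smul hpdf (ae_of_all _ fun _ => ENNReal.ofReal_lt_top),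
    ← integral_Ici_eq_integral_Ioi, ← integral_indicator measurableSet_Ici]
  congr 1 with t
  by_cases ht : 0 ≤ t
  · simp [exponentialPDF_of_nonneg ht, ht,
      ENNReal.toReal_ofReal (by positivity : 0 ≤ r * exp (-(r * t)))]
  · simp [exponentialPDF_of_neg (not_le.mp ht), ht]

lemma ae_nonneg_expMeasure : ∀ᵐ t ∂expMeasure r, 0 ≤ t := by
  simp only [ae_iff, not_le]
  change volume.withDensity (exponentialPDF r) (Iio 0) = 0
  rw [withDensity_apply _ measurableSet_Iio]
  simpa using lintegral_exponentialPDF_of_nonpos (r := r) le_rfl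

lemma integral_id_expMeasure (hr : 0 < r) : ∫ t, t ∂expMeasure r = 1 / r := by
  have h : ∫ t in Ioi 0, t * exp (-(r * t)) = (r ^ 2)⁻¹ := by
    simpa [Real.Gamma_two, show (2 : ℝ) - 1 = 1 by norm_num] using
      integral_rpow_mul_exp_neg_mul_Ioi (a := 2) two_pos hr
  rw [integral_expMeasure_eq_setIntegral hr]
  simp_rw [mul_assoc, mul_comm (exp _)]
  rw [integral_const_mul, h]
  field_simp

lemma integrable_id_expMeasure (hr : 0 < r) : Integrable (fun t => t) (expMeasure r) :=
  Integrable.of_integral_ne_zero (by rw [integral_id_expMeasure hr]; positivity)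

/-- The memoryless property of the exponential distribution. -/
lemma integral_indicator_Ioi_comp_sub_right_expMeasure (hr : 0 < r) {c : ℝ} (hc : 0 ≤ c)
    (f : ℝ → ℝ) :
    ∫ t, (Ioi c).indicator (fun t => f (t - c)) t ∂expMeasure r =
      exp (-(r * c)) * ∫ t, f t ∂expMeasure r := by
  rw [integral_expMeasure_eq_setIntegral hr, integral_expMeasure_eq_setIntegral hr,
    ← integral_const_mul, ← integral_indicator measurableSet_Ioi,
    ← integral_indicator measurableSet_Ioi, ← integral_add_right_eq_self _ c]
  congr 1 with u
  by_cases hu : 0 < u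
  · simp only [mem_Ioi, lt_add_iff_pos_left, hu, hc.trans_lt, indicator_of_mem,
      add_sub_cancel_right]
    rw [show -(r * (u + c)) = -(r * u) + -(r * c) by ring, exp_add]
    ring
  · simp [hu, show ¬ c < u + c by linarith]

lemma integral_max_sub_zero_expMeasure_of_nonneg (hr : 0 < r) {s : ℝ} (hs : 0 ≤ s) :
    ∫ t, max (t - s) 0 ∂expMeasure r = exp (-(r * s)) / r := by
  have h := integral_indicator_Ioi_comp_sub_right_expMeasure hr hs (fun t => t)
  rw [integral_id_expMeasure hr, ← div_eq_mul_one_div] at h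
  rw [← h]
  congr 1 with t
  by_cases ht : s < t
  · simp [ht, ht.le]
  · simp [ht, not_lt.mp ht]

lemma integral_max_sub_zero_expMeasure_of_nonpos (hr : 0 < r) {s : ℝ} (hs : s ≤ 0) :
    ∫ t, max (t - s) 0 ∂expMeasure r = 1 / r - s := by
  have := isProbabilityMeasure_expMeasure hr
  rw [integral_congr_ae (g := fun t => t - s), integral_sub (integrable_id_expMeasure hr)
    (integrable_const s), integral_id_expMeasure hr, integral_const, probReal_univ, one_smul]
  filter_upwards [ae_nonneg_expMeasure] with t ht
  exact max_eq_left (by linarith)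

lemma integral_max_add_mul_zero_expMeasure (hr : 0 < r) {β : ℝ} (hβ : 0 < β) (u : ℝ) :
    ∫ t, max (u + β * t) 0 ∂expMeasure r =
      if u ≤ 0 then β / r * exp (r * u / β) else u + β / r := by
  have hscale : ∀ t, max (u + β * t) 0 = β * max (t - -u / β) 0 := fun t => by
    rw [mul_max_of_nonneg _ _ hβ.le, mul_zero, mul_sub, mul_div_cancel₀ _ hβ.ne']
    ring_nf
  simp_rw [hscale]
  rw [integral_const_mul]
  split_ifs with hu
  · rw [integral_max_sub_zero_expMeasure_of_nonneg hr (div_nonneg (neg_nonneg.mpr hu) hβ.le)]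
    ring_nf
  · rw [integral_max_sub_zero_expMeasure_of_nonpos hr
      (div_nonpos_of_nonpos_of_nonneg (by linarith) hβ.le)]
    field_simp
    ring

lemma integral_exp_neg_mul_expMeasure (hr : 0 < r) {s : ℝ} (hs : -r < s) :
    ∫ t, exp (-(s * t)) ∂expMeasure r = r / (r + s) := by
  rw [integral_expMeasure_eq_setIntegral hr]
  simp_rw [mul_assoc, ← exp_add, show ∀ t, -(r * t) + -(s * t) = -(r + s) * t from fun t => by ring]
  rw [integral_const_mul, integral_exp_mul_Ioi (by linarith), mul_zero, exp_zero]
  field_simp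

lemma integral_indicator_Iic_exp_mul_expMeasure (hr : 0 < r) {c : ℝ} (hc : 0 ≤ c) {p : ℝ}
    (hp : p ≠ r) :
    ∫ t, (Iic c).indicator (fun t => exp (p * t)) t ∂expMeasure r =
      r * (exp ((p - r) * c) - 1) / (p - r) := by
  have hpt : ∀ t ∈ Ioi (0 : ℝ), r * exp (-(r * t)) * (Iic c).indicator (fun t => exp (p * t)) t =
      (Iic c).indicator (fun t => r * exp ((p - r) * t)) t := by
    intro t _
    by_cases htc : t ≤ c
    · simp only [indicator_of_mem (mem_Iic.mpr htc), mul_assoc, ← exp_add]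
      ring_nf
    · simp [htc]
  rw [integral_expMeasure_eq_setIntegral hr, setIntegral_congr_fun measurableSet_Ioi hpt,
    setIntegral_indicator measurableSet_Iic, Ioi_inter_Iic, ← intervalIntegral.integral_of_le hc,
    intervalIntegral.integral_const_mul,
    intervalIntegral.integral_comp_mul_left _ (sub_ne_zero.mpr hp), integral_exp, mul_zero,
    exp_zero, smul_eq_mul]
  field_simp

end ExponentialDistribution

section ProductOfExponentials

variable {r : ℝ}

lemma integrable_affine_prod_expMeasure (hr : 0 < r) (α β γ : ℝ) :
    Integrable (fun p : ℝ × ℝ => α * p.1 + β * p.2 + γ) ((expMeasure r).prod (expMeasure r)) := by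
  have := isProbabilityMeasure_expMeasure hr
  have hid := integrable_id_expMeasure hr
  exact (((hid.comp_fst _).const_mul α).add ((hid.comp_snd _).const_mul β)).add
    (integrable_const γ)

lemma integral_max_sub_sub_zero_prod_expMeasure (hr : 0 < r) {c : ℝ} (hc : 0 ≤ c) :
    ∫ p, max (p.1 - p.2 - c) 0 ∂(expMeasure r).prod (expMeasure r) =
      exp (-(r * c)) / (2 * r) := by
  have := isProbabilityMeasure_expMeasure hr
  have hint := (integrable_affine_prod_expMeasure hr 1 (-1) (-c)).pos_part
  simp only [one_mul, neg_one_mul, ← sub_eq_add_neg] at hint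
  have hinner : ∀ᵐ b ∂expMeasure r,
      ∫ a, max (a - b - c) 0 ∂expMeasure r = exp (-(r * c)) / r * exp (-(r * b)) := by
    filter_upwards [ae_nonneg_expMeasure] with b hb
    simp_rw [sub_sub]
    rw [integral_max_sub_zero_expMeasure_of_nonneg hr (by linarith), mul_add, neg_add, exp_add]
    ring
  rw [integral_prod_symm _ hint, integral_congr_ae hinner, integral_const_mul,
    integral_exp_neg_mul_expMeasure hr (by linarith)]
  field_simp
  ring

lemma integral_max_mul_add_mul_sub_zero_prod_expMeasure (hr : 0 < r) {α β Δ : ℝ} (hα : 0 < α)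
    (hβ : 0 < β) (hαβ : α ≠ β) (hΔ : 0 ≤ Δ) :
    ∫ p, max (α * p.1 + β * p.2 - Δ) 0 ∂(expMeasure r).prod (expMeasure r) =
      (α ^ 2 * exp (-(r * Δ / α)) - β ^ 2 * exp (-(r * Δ / β))) / (r * (α - β)) := by
  have := isProbabilityMeasure_expMeasure hr
  set c := Δ / α with hc_def
  have hc : 0 ≤ c := div_nonneg hΔ hα.le
  have hint := (integrable_affine_prod_expMeasure hr α β (-Δ)).pos_part
  simp only [← sub_eq_add_neg] at hint
  have hinner : ∀ a, ∫ b, max (α * a + β * b - Δ) 0 ∂expMeasure r =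
      β / r * exp (-(r * Δ / β)) * (Iic c).indicator (fun a => exp (r * α / β * a)) a +
        (Ioi c).indicator (fun a => α * (a - c) + β / r) a := by
    intro a
    simp_rw [add_sub_right_comm]
    rw [integral_max_add_mul_zero_expMeasure hr hβ]
    by_cases hac : a ≤ c
    · rw [if_pos (by rwa [hc_def, le_div_iff₀' hα, ← sub_nonpos] at hac),
        indicator_of_mem (mem_Iic.mpr hac), indicator_of_notMem (by simpa using hac), add_zero,
        mul_assoc, ← exp_add]
      ring_nf
    · rw [if_neg (by rwa [hc_def, le_div_iff₀' hα, ← sub_nonpos] at hac),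
        indicator_of_notMem (by simpa using hac), indicator_of_mem (by simpa using hac),
        mul_zero, zero_add, hc_def, mul_sub, mul_div_cancel₀ _ hα.ne']
  have hq : r * α / β ≠ r := by
    rwa [Ne, div_eq_iff hβ.ne', mul_right_inj' hr.ne']
  have hmean : ∫ u, (α * u + β / r) ∂expMeasure r = (α + β) / r := by
    rw [integral_add ((integrable_id_expMeasure hr).const_mul α) (integrable_const _),
      integral_const_mul, integral_id_expMeasure hr, integral_const, probReal_univ, one_smul]
    ring
  have hexcess := integral_indicator_Ioi_comp_sub_right_expMeasure hr hc (fun u => α * u + β / r)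
  rw [hmean] at hexcess
  rw [integral_prod _ hint, integral_congr_ae (ae_of_all _ hinner),
    integral_add ((integrable_indicator_Iic_exp_mul (by positivity) c).const_mul _)
      (Integrable.of_integral_ne_zero (by rw [hexcess]; positivity)),
    integral_const_mul, integral_indicator_Iic_exp_mul_expMeasure hr hc hq, hexcess]
  have hshift : exp (-(r * Δ / β)) * exp ((r * α / β - r) * c) = exp (-(r * Δ / α)) := by
    rw [← exp_add, hc_def]
    congr 1
    field_simp
    ring
  rw [show exp (-(r * c)) = exp (-(r * Δ / α)) by rw [hc_def, mul_div_assoc], ← hshift]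
  have := sub_ne_zero.mpr hαβ
  have := sub_ne_zero.mpr hq
  field_simp
  ring

end ProductOfExponentials

lemma IndepFun.integral_comp_eq_integral_prod {Ω α β E : Type*} [MeasurableSpace Ω]
    [MeasurableSpace α] [MeasurableSpace β] [NormedAddCommGroup E] [NormedSpace ℝ E]
    {P : Measure Ω} [IsFiniteMeasure P] {x : Ω → α} {y : Ω → β} (hxy : IndepFun x y P)
    (hx : AEMeasurable x P) (hy : AEMeasurable y P) {F : α × β → E}
    (hF : AEStronglyMeasurable F ((P.map x).prod (P.map y))) :
    ∫ ω, F (x ω, y ω) ∂P = ∫ p, F p ∂(P.map x).prod (P.map y) := by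
  rw [← hxy.map_prod_eq_prod_map_map hx hy] at hF ⊢
  exact (integral_map (hx.prodMk hy) hF).symm

section ExponentialRandomVariables

variable {Ω : Type*} [MeasurableSpace Ω] {P : Measure Ω} {r : ℝ} {x y : Ω → ℝ}

lemma integrable_of_map_eq_expMeasure (hr : 0 < r) (hx : AEMeasurable x P)
    (hlx : P.map x = expMeasure r) : Integrable x P :=
  (integrable_map_measure aestronglyMeasurable_id hx).mp (hlx ▸ integrable_id_expMeasure hr)

lemma integral_of_map_eq_expMeasure (hr : 0 < r) (hx : AEMeasurable x P)
    (hlx : P.map x = expMeasure r) : ∫ ω, x ω ∂P = 1 / r := by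
  rw [← integral_id_expMeasure hr, ← hlx, integral_map (f := fun t => t) hx aestronglyMeasurable_id]

lemma ae_nonneg_of_map_eq_expMeasure (hx : AEMeasurable x P) (hlx : P.map x = expMeasure r) :
    ∀ᵐ ω ∂P, 0 ≤ x ω :=
  ae_of_ae_map hx (hlx ▸ ae_nonneg_expMeasure)

variable [IsProbabilityMeasure P]

lemma integral_max_mul_sub_mul_sub_zero_of_indepFun (hr : 0 < r) (hxy : IndepFun x y P)
    (hx : Measurable x) (hy : Measurable y) (hlx : P.map x = expMeasure r)
    (hly : P.map y = expMeasure r) {a Δ : ℝ} (ha : 0 < a) (hΔ : 0 ≤ Δ) :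
    ∫ ω, max (a * x ω - a * y ω - Δ) 0 ∂P = a * exp (-(r * Δ / a)) / (2 * r) := by
  have hscale : ∀ ω, max (a * x ω - a * y ω - Δ) 0 = a * max (x ω - y ω - Δ / a) 0 := fun ω => by
    rw [mul_max_of_nonneg _ _ ha.le, mul_zero, mul_sub, mul_sub, mul_div_cancel₀ _ ha.ne']
  simp_rw [hscale]
  rw [integral_const_mul,
    hxy.integral_comp_eq_integral_prod (F := fun p => max (p.1 - p.2 - Δ / a) 0)
      hx.aemeasurable hy.aemeasurable (by fun_prop), hlx, hly,
    integral_max_sub_sub_zero_prod_expMeasure hr (div_nonneg hΔ ha.le), mul_div_assoc r Δ a,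
    mul_div_assoc]

lemma integral_max_mul_add_mul_sub_zero_of_indepFun (hr : 0 < r) (hxy : IndepFun x y P)
    (hx : Measurable x) (hy : Measurable y) (hlx : P.map x = expMeasure r)
    (hly : P.map y = expMeasure r) {α β Δ : ℝ} (hα : 0 < α) (hβ : 0 < β) (hαβ : α ≠ β)
    (hΔ : 0 ≤ Δ) :
    ∫ ω, max (α * x ω + β * y ω - Δ) 0 ∂P =
      (α ^ 2 * exp (-(r * Δ / α)) - β ^ 2 * exp (-(r * Δ / β))) / (r * (α - β)) := by
  rw [hxy.integral_comp_eq_integral_prod (F := fun p => max (α * p.1 + β * p.2 - Δ) 0)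
    hx.aemeasurable hy.aemeasurable (by fun_prop), hlx, hly,
    integral_max_mul_add_mul_sub_zero_prod_expMeasure hr hα hβ hαβ hΔ]

end ExponentialRandomVariables

end ProbabilityTheory

section BusyTimes

lemma min_eq_sub_max_sub_zero (a b : ℝ) : min a b = a - max (a - b) 0 := by
  rcases le_total a b with h | h
  · rw [min_eq_left h, max_eq_right (by linarith)]; ring
  · rw [min_eq_right h, max_eq_left (by linarith)]; ring

lemma ite_lt_min_sub_eq {a b Δ : ℝ} (hb : 0 ≤ b) :
    (if Δ < a then min (a - Δ) b else 0) = max (a - Δ) 0 - max (a - Δ - b) 0 := by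
  split_ifs with h
  · rw [min_eq_sub_max_sub_zero, max_eq_left (sub_nonneg.mpr h.le)]
  · rw [max_eq_right (by linarith), max_eq_right (by linarith)]; ring

variable {Ω : Type*} [MeasurableSpace Ω] {P : Measure Ω} [IsFiniteMeasure P] {X₁ X₂ : Ω → ℝ}

lemma integral_min_add_eq_sub (hX₁ : Integrable X₁ P) (hX₂ : Integrable X₂ P) (Δ : ℝ) :
    ∫ ω, min (X₁ ω) (Δ + X₂ ω) ∂P = ∫ ω, X₁ ω ∂P - ∫ ω, max (X₁ ω - Δ - X₂ ω) 0 ∂P := by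
  simp_rw [min_eq_sub_max_sub_zero, ← sub_sub]
  exact integral_sub hX₁ ((hX₁.sub (integrable_const Δ)).sub hX₂).pos_part

lemma integral_ite_lt_min_sub_eq_sub (hX₁ : Integrable X₁ P)
    (hX₂ : Integrable X₂ P) (hX₂0 : ∀ᵐ ω ∂P, 0 ≤ X₂ ω) (Δ : ℝ) :
    ∫ ω, (if Δ < X₁ ω then min (X₁ ω - Δ) (X₂ ω) else 0) ∂P =
      ∫ ω, max (X₁ ω - Δ) 0 ∂P - ∫ ω, max (X₁ ω - Δ - X₂ ω) 0 ∂P := by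
  rw [integral_congr_ae (hX₂0.mono fun ω h => ite_lt_min_sub_eq h)]
  exact integral_sub (hX₁.sub (integrable_const Δ)).pos_part
    ((hX₁.sub (integrable_const Δ)).sub hX₂).pos_part

end BusyTimes

theorem deferred_replication_resource_usage_correlated_general
    {Ω : Type*} [MeasurableSpace Ω] (P : Measure Ω) [IsProbabilityMeasure P]
    (μ : ℝ) (hμ : 0 < μ) (δ : ℝ) (hδ0 : 0 < δ) (hδ1 : δ < 1) (hδhalf : δ ≠ 1 / 2)
    (Δ : ℝ) (hΔ : 0 ≤ Δ) (lam : ℝ)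
    (x y z : Ω → ℝ)
    (hxmeas : Measurable x) (hymeas : Measurable y) (hzmeas : Measurable z)
    (hlaw : ∀ w ∈ ({x, y, z} : Set (Ω → ℝ)), Measure.map w P = expMeasure μ)
    (hindep : iIndepFun ![x, y, z] P)
    (X₁ X₂ : Ω → ℝ)
    (hX₁ : X₁ = fun ω => (1 - δ) * x ω + δ * z ω)
    (hX₂ : X₂ = fun ω => (1 - δ) * y ω + δ * z ω) :
    (∫ ω, min (X₁ ω) (Δ + X₂ ω) ∂P =
        (1 / μ) * (1 - (1 - δ) / 2 * exp (-(μ * Δ / (1 - δ))))) ∧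
      (∫ ω, (if Δ < X₁ ω then min (X₁ ω - Δ) (X₂ ω) else 0) ∂P =
        (1 / μ) * (δ ^ 2 / (2 * δ - 1) * exp (-(μ * Δ / δ)) -
          (1 - δ) / (2 * (2 * δ - 1)) * exp (-(μ * Δ / (1 - δ))))) ∧
      lam * (∫ ω, min (X₁ ω) (Δ + X₂ ω) ∂P) +
          lam * (∫ ω, (if Δ < X₁ ω then min (X₁ ω - Δ) (X₂ ω) else 0) ∂P) =
        (lam / μ) * (1 + δ ^ 2 / (2 * δ - 1) * exp (-(μ * Δ / δ)) -
          δ * (1 - δ) / (2 * δ - 1) * exp (-(μ * Δ / (1 - δ)))) := by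
  have h1δ : 0 < 1 - δ := by linarith
  have hlx : P.map x = expMeasure μ := hlaw x (by simp)
  have hly : P.map y = expMeasure μ := hlaw y (by simp)
  have hlz : P.map z = expMeasure μ := hlaw z (by simp)
  have hxy : IndepFun x y P := hindep.indepFun (i := 0) (j := 1) (by decide)
  have hxz : IndepFun x z P := hindep.indepFun (i := 0) (j := 2) (by decide)
  have hxi := integrable_of_map_eq_expMeasure hμ hxmeas.aemeasurable hlx
  have hyi := integrable_of_map_eq_expMeasure hμ hymeas.aemeasurable hly
  have hzi := integrable_of_map_eq_expMeasure hμ hzmeas.aemeasurable hlz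
  have hX₂0 : ∀ᵐ ω ∂P, 0 ≤ X₂ ω := by
    filter_upwards [ae_nonneg_of_map_eq_expMeasure hymeas.aemeasurable hly,
      ae_nonneg_of_map_eq_expMeasure hzmeas.aemeasurable hlz] with ω hyω hzω
    rw [hX₂]
    positivity
  have hmean : ∫ ω, X₁ ω ∂P = 1 / μ := by
    rw [hX₁, integral_add (hxi.const_mul _) (hzi.const_mul _), integral_const_mul,
      integral_const_mul, integral_of_map_eq_expMeasure hμ hxmeas.aemeasurable hlx,
      integral_of_map_eq_expMeasure hμ hzmeas.aemeasurable hlz]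
    ring
  have hidle : ∫ ω, max (X₁ ω - Δ - X₂ ω) 0 ∂P = (1 - δ) * exp (-(μ * Δ / (1 - δ))) / (2 * μ) := by
    rw [← integral_max_mul_sub_mul_sub_zero_of_indepFun hμ hxy hxmeas hymeas hlx hly h1δ hΔ, hX₁,
      hX₂]
    congr 1 with ω
    ring_nf
  have hexcess : ∫ ω, max (X₁ ω - Δ) 0 ∂P = ((1 - δ) ^ 2 * exp (-(μ * Δ / (1 - δ))) -
      δ ^ 2 * exp (-(μ * Δ / δ))) / (μ * (1 - δ - δ)) := by
    rw [hX₁]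
    exact integral_max_mul_add_mul_sub_zero_of_indepFun hμ hxz hxmeas hzmeas hlx hlz h1δ hδ0
      (by contrapose! hδhalf; linarith) hΔ
  have hX₁i : Integrable X₁ P := hX₁ ▸ (hxi.const_mul _).add (hzi.const_mul _)
  have hX₂i : Integrable X₂ P := hX₂ ▸ (hyi.const_mul _).add (hzi.const_mul _)
  rw [integral_min_add_eq_sub hX₁i hX₂i, integral_ite_lt_min_sub_eq_sub hX₁i hX₂i hX₂0, hmean,
    hidle, hexcess, show 1 - δ - δ = -(2 * δ - 1) by ring]
  have h2δ : δ * 2 - 1 ≠ 0 := by contrapose! hδhalf; linarith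
  refine ⟨by field_simp, by field_simp; ring, by field_simp; ring⟩

/-- **Resource usage under correlated replication with a deferred replica.**
Let `x, y, z` be i.i.d. exponential(μ) random variables, `δ ∈ (0,1)` with
`δ ≠ 1/2`, and let `X₁ = (1−δ)x + δz` and `X₂ = (1−δ)y + δz` be the correlated
original and replica service times.  The replica is started only if the
original is still running after the replication offset `Δ ≥ 0`.  Then
(i) `E[min {X₁, Δ + X₂}] = (1/μ)(1 − ((1−δ)/2)·e^{−μΔ/(1−δ)})`;
(ii) `E[min {X₁ − Δ, X₂} · 1_{X₁ > Δ}]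
      = (1/μ)((δ²/(2δ−1))·e^{−μΔ/δ} − ((1−δ)/(2(2δ−1)))·e^{−μΔ/(1−δ)})`;
hence (iii) for any arrival rate `λ > 0`, the resource usage `u = ρ₁ + ρ₂`
equals `(λ/μ)(1 + (δ²/(2δ−1))·e^{−μΔ/δ} − (δ(1−δ)/(2δ−1))·e^{−μΔ/(1−δ)})`. -/
theorem deferred_replication_resource_usage_correlated
    {Ω : Type*} [MeasurableSpace Ω] (P : Measure Ω) [IsProbabilityMeasure P]
    (μ : ℝ) (hμ : 0 < μ) (δ : ℝ) (hδ0 : 0 < δ) (hδ1 : δ < 1) (hδhalf : δ ≠ 1 / 2)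
    (Δ : ℝ) (hΔ : 0 ≤ Δ) (lam : ℝ) (hlam : 0 < lam)
    (x y z : Ω → ℝ)
    (hxmeas : Measurable x) (hymeas : Measurable y) (hzmeas : Measurable z)
    (hlaw : ∀ w ∈ ({x, y, z} : Set (Ω → ℝ)), Measure.map w P = expMeasure μ)
    (hindep : iIndepFun ![x, y, z] P)
    (X₁ X₂ : Ω → ℝ)
    (hX₁ : X₁ = fun ω => (1 - δ) * x ω + δ * z ω)
    (hX₂ : X₂ = fun ω => (1 - δ) * y ω + δ * z ω) :
    (∫ ω, min (X₁ ω) (Δ + X₂ ω) ∂P =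
        (1 / μ) * (1 - (1 - δ) / 2 * exp (-(μ * Δ / (1 - δ))))) ∧
      (∫ ω, (if Δ < X₁ ω then min (X₁ ω - Δ) (X₂ ω) else 0) ∂P =
        (1 / μ) * (δ ^ 2 / (2 * δ - 1) * exp (-(μ * Δ / δ)) -
          (1 - δ) / (2 * (2 * δ - 1)) * exp (-(μ * Δ / (1 - δ))))) ∧
      lam * (∫ ω, min (X₁ ω) (Δ + X₂ ω) ∂P) +
          lam * (∫ ω, (if Δ < X₁ ω then min (X₁ ω - Δ) (X₂ ω) else 0) ∂P) =
        (lam / μ) * (1 + δ ^ 2 / (2 * δ - 1) * exp (-(μ * Δ / δ)) -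
          δ * (1 - δ) / (2 * δ - 1) * exp (-(μ * Δ / (1 - δ)))) :=
  deferred_replication_resource_usage_correlated_general P μ hμ δ hδ0 hδ1 hδhalf Δ hΔ lam x y z
    hxmeas hymeas hzmeas hlaw hindep X₁ X₂ hX₁ hX₂
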